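/- In the exterior algebra on e_0,…,e_5 over ℚ, let ρ_1 = ∂e_{145}, ρ_2 = ∂e_{012}, ρ_3 = ∂e_{034}, ρ_4 = ∂e_{235}, where ∂e_{ijl} = e_j∧e_l − e_i∧e_l + e_i∧e_j. Then ρ_1 + ρ_2 + ρ_3 − ρ_4 = (e_0 − e_1 − e_3 + e_5) ∧ (e_1 − e_2 + e_3 − e_4). -/
import Mathlib


open ExteriorAlgebra

/-- In `Λ(ℚ^6)`, with `ρ₁ = ∂e_{145}`, `ρ₂ = ∂e_{012}`, `ρ₃ = ∂e_{034}`,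
`ρ₄ = ∂e_{235}` (where `∂e_{ijl} = e_j∧e_l − e_i∧e_l + e_i∧e_j`), one has
`ρ₁ + ρ₂ + ρ₃ − ρ₄ = (e₀ − e₁ − e₃ + e₅) ∧ (e₁ − e₂ + e₃ − e₄)`. -/
theorem braid_essential_component_decomposable :
    letI e : Fin 6 → ExteriorAlgebra ℚ (Fin 6 → ℚ) := fun p => ι ℚ (Pi.single p 1)
    letI ρ : Fin 6 → Fin 6 → Fin 6 → ExteriorAlgebra ℚ (Fin 6 → ℚ) :=
      fun i j l => e j * e l - e i * e l + e i * e j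
    ρ 1 4 5 + ρ 0 1 2 + ρ 0 3 4 - ρ 2 3 5
      = (e 0 - e 1 - e 3 + e 5) * (e 1 - e 2 + e 3 - e 4) := by
  beta_reduce
  have swap : ∀ i j : Fin 6, ι ℚ ((Pi.single j 1 : Fin 6 → ℚ)) * ι ℚ ((Pi.single i 1 : Fin 6 → ℚ))
      = -(ι ℚ ((Pi.single i 1 : Fin 6 → ℚ)) * ι ℚ ((Pi.single j 1 : Fin 6 → ℚ))) := fun i j =>
    eq_neg_of_add_eq_zero_left (by rw [add_comm]; exact ι_add_mul_swap _ _)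
  have sq : ∀ i : Fin 6, ι ℚ ((Pi.single i 1 : Fin 6 → ℚ)) * ι ℚ ((Pi.single i 1 : Fin 6 → ℚ)) = 0 :=
    fun i => ι_sq_zero _
  simp only [mul_sub, sub_mul, mul_add, add_mul, sq,
    swap 0 1, swap 0 2, swap 0 3, swap 0 4, swap 0 5,
    swap 1 2, swap 1 3, swap 1 4, swap 1 5,
    swap 2 3, swap 2 4, swap 2 5, swap 3 4, swap 3 5, swap 4 5]
  abel
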